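/- Let (X, μ) be a measure space, B ⊆ X measurable with 0 < μ(B) < ∞, and υ : B → ℝ measurable with 0 ≤ υ ≤ L, L > 0. Suppose μ({x ∈ B : υ = 0}) ≥ θ·μ(B) with θ ∈ (0, 1]. Then μ({x ∈ B : υ(x) = L})·L ≤ (1/θ)·∫_B |υ − ῡ| dμ, where ῡ := (1/μ(B))·∫_B υ dμ is the average of υ over B. -/

import Mathlib

/-!
Since `υ ≤ L` on `B` and `υ` vanishes on a `θ`-fraction of `B`, the mean `ῡ` is at most
`(1 - θ) L`. Hence on `{υ = L}` the oscillation `|υ - ῡ|` is at least `θ L`, and integrating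
this lower bound over `{υ = L} ⊆ B` gives the estimate.
-/

open MeasureTheory Set

namespace MeasureTheory

variable {X : Type*} [MeasurableSpace X] {μ : Measure X} {B S Z : Set X} {f : X → ℝ} {c L θ : ℝ}

lemma setIntegral_le_mul_measureReal_sub_of_eq_zero (hB : MeasurableSet B) (hB₁ : μ B ≠ ⊤)
    (hZ : MeasurableSet Z) (hZB : Z ⊆ B) (hf : IntegrableOn f B μ)
    (hfL : ∀ x ∈ B, f x ≤ L) (hfZ : ∀ x ∈ Z, f x = 0) :
    ∫ x in B, f x ∂μ ≤ L * (μ.real B - μ.real Z) :=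
  calc ∫ x in B, f x ∂μ = ∫ x in B \ Z, f x ∂μ :=
        setIntegral_eq_of_subset_of_forall_sdiff_eq_zero hB sdiff_subset
          (fun x hx => hfZ x (by rwa [sdiff_sdiff_cancel_left hZB] at hx))
    _ ≤ ∫ _ in B \ Z, L ∂μ :=
        setIntegral_mono_on (hf.mono_set sdiff_subset)
          (integrableOn_const (measure_ne_top_of_subset sdiff_subset hB₁)) (hB.diff hZ)
          (fun x hx => hfL x hx.1)
    _ = L * (μ.real B - μ.real Z) := by
        rw [setIntegral_const, smul_eq_mul, measureReal_sdiff hZB hZ hB₁, mul_comm]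

lemma setAverage_le_one_sub_mul_of_eq_zero (hB : MeasurableSet B) (hB₀ : μ B ≠ 0)
    (hB₁ : μ B ≠ ⊤) (hZ : MeasurableSet Z) (hZB : Z ⊆ B) (hf : IntegrableOn f B μ)
    (hL : 0 ≤ L) (hfL : ∀ x ∈ B, f x ≤ L) (hfZ : ∀ x ∈ Z, f x = 0)
    (hθ : θ * μ.real B ≤ μ.real Z) :
    ⨍ x in B, f x ∂μ ≤ (1 - θ) * L := by
  have hpos : 0 < μ.real B := ENNReal.toReal_pos hB₀ hB₁
  rw [setAverage_eq, smul_eq_mul, inv_mul_le_iff₀ hpos]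
  calc ∫ x in B, f x ∂μ ≤ L * (μ.real B - μ.real Z) :=
        setIntegral_le_mul_measureReal_sub_of_eq_zero hB hB₁ hZ hZB hf hfL hfZ
    _ ≤ L * (μ.real B - θ * μ.real B) := by gcongr
    _ = μ.real B * ((1 - θ) * L) := by ring

lemma measureReal_mul_le_setIntegral_abs_sub (hS : MeasurableSet S) (hSB : S ⊆ B)
    (hfS : ∀ x ∈ S, f x = L) (hint : IntegrableOn (fun x => |f x - c|) B μ) :
    μ.real S * (L - c) ≤ ∫ x in B, |f x - c| ∂μ :=
  calc μ.real S * (L - c) ≤ μ.real S * |L - c| := by gcongr; exact le_abs_self _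
    _ = ∫ x in S, |f x - c| ∂μ := by
        rw [setIntegral_congr_fun hS (g := fun _ => |L - c|) (fun x hx => by rw [hfS x hx]),
          setIntegral_const, smul_eq_mul]
    _ ≤ ∫ x in B, |f x - c| ∂μ :=
        setIntegral_mono_set hint (ae_of_all _ fun _ => abs_nonneg _) (ae_of_all _ hSB)

end MeasureTheory

theorem level_set_estimate_from_oscillation_general
    {X : Type*} [MeasurableSpace X] (μ : Measure X)
    (B : Set X) (hB : MeasurableSet B) (hB₀ : 0 < μ B) (hB₁ : μ B < ⊤)
    (υ : X → ℝ) (hmeas : Measurable υ)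
    (L : ℝ) (hL : 0 < L)
    (h₀ : ∀ x ∈ B, 0 ≤ υ x) (h₁ : ∀ x ∈ B, υ x ≤ L)
    (θ : ℝ) (hθ₀ : 0 < θ)
    (hdens : ENNReal.ofReal θ * μ B ≤ μ {x ∈ B | υ x = 0}) :
    (μ {x ∈ B | υ x = L}).toReal * L ≤
      (1 / θ) * ∫ x in B, |υ x - (1 / (μ B).toReal) * ∫ y in B, υ y ∂μ| ∂μ := by
  have hint : IntegrableOn υ B μ :=
    Measure.integrableOn_of_bounded hB₁.ne hmeas.aestronglyMeasurable (M := L) <|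
      (ae_restrict_mem hB).mono fun x hx => abs_le.2 ⟨by linarith [h₀ x hx], h₁ x hx⟩
  have hdens' : θ * μ.real B ≤ μ.real {x ∈ B | υ x = 0} := by
    simpa [measureReal_def, ENNReal.toReal_mul, hθ₀.le] using
      ENNReal.toReal_mono (measure_ne_top_of_subset (sep_subset _ _) hB₁.ne) hdens
  have havg : 1 / (μ B).toReal * ∫ y in B, υ y ∂μ = ⨍ y in B, υ y ∂μ := by
    rw [setAverage_eq, smul_eq_mul, measureReal_def, one_div]
  rw [havg, ← measureReal_def]
  have hZ : MeasurableSet {x ∈ B | υ x = 0} := hB.inter (hmeas (measurableSet_singleton 0))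
  have hS : MeasurableSet {x ∈ B | υ x = L} := hB.inter (hmeas (measurableSet_singleton L))
  have hmean : ⨍ x in B, υ x ∂μ ≤ (1 - θ) * L :=
    setAverage_le_one_sub_mul_of_eq_zero hB hB₀.ne' hB₁.ne hZ (sep_subset _ _) hint
      hL.le h₁ (fun x hx => hx.2) hdens'
  have hosc := measureReal_mul_le_setIntegral_abs_sub (μ := μ) (c := ⨍ x in B, υ x ∂μ)
    hS (sep_subset _ _) (fun x hx => hx.2)
    (hint.sub (integrableOn_const hB₁.ne)).abs
  rw [one_div, ← div_eq_inv_mul, le_div_iff₀ hθ₀]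
  calc μ.real {x ∈ B | υ x = L} * L * θ = μ.real {x ∈ B | υ x = L} * (θ * L) := by ring
    _ ≤ μ.real {x ∈ B | υ x = L} * (L - ⨍ x in B, υ x ∂μ) := by gcongr; linarith
    _ ≤ _ := hosc

theorem level_set_estimate_from_oscillation
    {X : Type*} [MeasurableSpace X] (μ : Measure X)
    (B : Set X) (hB : MeasurableSet B) (hB₀ : 0 < μ B) (hB₁ : μ B < ⊤)
    (υ : X → ℝ) (hmeas : Measurable υ)
    (L : ℝ) (hL : 0 < L)
    (h₀ : ∀ x ∈ B, 0 ≤ υ x) (h₁ : ∀ x ∈ B, υ x ≤ L)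
    (θ : ℝ) (hθ₀ : 0 < θ) (hθ₁ : θ ≤ 1)
    (hdens : ENNReal.ofReal θ * μ B ≤ μ {x ∈ B | υ x = 0}) :
    (μ {x ∈ B | υ x = L}).toReal * L ≤
      (1 / θ) * ∫ x in B, |υ x - (1 / (μ B).toReal) * ∫ y in B, υ y ∂μ| ∂μ :=
  level_set_estimate_from_oscillation_general μ B hB hB₀ hB₁ υ hmeas L hL h₀ h₁ θ hθ₀ hdens
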